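/- arXiv:1911.01835 — 6 statements merged into one kernel-verified Lean document; each statement's English description precedes it below -/
import Mathlib

section
/- For any real I with I ≠ -1 and σ + a·I ≠ 0, the point (A/(1+I), Bσ/(σ + a·I), I) is an equilibrium of the Yamada system with I ≠ 0 if and only if I is a root of the quadratic a·I² + (a(1-A) + (B+1)σ)·I + σ(B + 1 - A) = 0 (equivalently, G - Q - 1 = 0 at that point). -/
/-! At the point `(A / (1 + I), B σ / (σ + a I), I)` the `G`- and `Q`-components of the field
vanish identically, so for `I ≠ 0` it is an equilibrium exactly when `G - Q - 1 = 0`; multiplying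
that equation by `(1 + I)(σ + a I)` turns it into the negative of the quadratic. -/

/-- The Yamada vector field on ℝ³ (coordinates (G, Q, I)). -/
noncomputable def yamada (A B a γ σ : ℝ) (x : ℝ × ℝ × ℝ) : ℝ × ℝ × ℝ :=
  (γ * (A - x.1 - x.1 * x.2.2),
   (γ / σ) * (B - x.2.1 - (a / σ) * x.2.1 * x.2.2),
   (x.1 - x.2.1 - 1) * x.2.2)

section Yamada

variable {A B a γ σ G Q I : ℝ}

theorem yamada_fst_eq_zero (hI : 1 + I ≠ 0) :
    (yamada A B a γ σ (A / (1 + I), Q, I)).1 = 0 := by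
  simp only [yamada]
  field_simp
  ring

theorem yamada_snd_eq_zero (hσ : σ ≠ 0) (hI : σ + a * I ≠ 0) :
    (yamada A B a γ σ (G, B * σ / (σ + a * I), I)).2.1 = 0 := by
  simp only [yamada]
  field_simp
  ring

theorem yamada_thd_eq_zero_iff (hI : I ≠ 0) :
    (yamada A B a γ σ (G, Q, I)).2.2 = 0 ↔ G - Q - 1 = 0 :=
  mul_eq_zero.trans (or_iff_left hI)

theorem div_one_add_sub_div_sub_one_eq_zero_iff (hI1 : 1 + I ≠ 0) (hI2 : σ + a * I ≠ 0) :
    A / (1 + I) - B * σ / (σ + a * I) - 1 = 0 ↔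
      a * I ^ 2 + (a * (1 - A) + (B + 1) * σ) * I + σ * (B + 1 - A) = 0 := by
  have numerator_eq : A * (σ + a * I) - (1 + I) * (B * σ) - (1 + I) * (σ + a * I) =
      -(a * I ^ 2 + (a * (1 - A) + (B + 1) * σ) * I + σ * (B + 1 - A)) := by
    ring
  rw [div_sub_div _ _ hI1 hI2, div_sub_one (mul_ne_zero hI1 hI2), div_eq_zero_iff,
    or_iff_left (mul_ne_zero hI1 hI2), numerator_eq, neg_eq_zero]

end Yamada

theorem nontrivial_equilibrium_iff_quadratic_general (A B a γ σ I : ℝ)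
    (hσ : 0 < σ)
    (hI1 : I ≠ -1) (hI2 : σ + a * I ≠ 0) (hI0 : I ≠ 0) :
    yamada A B a γ σ (A / (1 + I), B * σ / (σ + a * I), I) = (0, 0, 0) ↔
      a * I ^ 2 + (a * (1 - A) + (B + 1) * σ) * I + σ * (B + 1 - A) = 0 := by
  have h1I : 1 + I ≠ 0 := fun h => hI1 (by linarith)
  rw [Prod.ext_iff, Prod.ext_iff, yamada_fst_eq_zero h1I, yamada_snd_eq_zero hσ.ne' hI2,
    yamada_thd_eq_zero_iff hI0, div_one_add_sub_div_sub_one_eq_zero_iff h1I hI2]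
  simp only [true_and]

/-- For I ≠ -1, σ + a·I ≠ 0 and I ≠ 0, the point
(A/(1+I), Bσ/(σ + aI), I) is an equilibrium of the Yamada system if and
only if I is a root of the quadratic
a·I² + (a(1-A) + (B+1)σ)·I + σ(B+1-A) = 0. -/
theorem nontrivial_equilibrium_iff_quadratic (A B a γ σ I : ℝ)
    (hγ : 0 < γ) (hσ : 0 < σ) (ha : 0 < a)
    (hI1 : I ≠ -1) (hI2 : σ + a * I ≠ 0) (hI0 : I ≠ 0) :
    yamada A B a γ σ (A / (1 + I), B * σ / (σ + a * I), I) = (0, 0, 0) ↔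
      a * I ^ 2 + (a * (1 - A) + (B + 1) * σ) * I + σ * (B + 1 - A) = 0 :=
  nontrivial_equilibrium_iff_quadratic_general A B a γ σ I hσ hI1 hI2 hI0
end

section
/- Let D(A) = a²(A-1)² - 2a(BA - A + B + 1)σ + (B+1)²σ², the discriminant governing the existence of nontrivial equilibria of the Yamada system. Then D(A) = 0 at A = A_S(σ) := (a + (B-1)σ + 2√(Bσ(a - σ)))/a, provided 0 < σ < a, B > 0, a > 0. -/
/-! Completing the square in `a (A - 1)` writes `D(A) = (a (A - 1) - (B - 1) σ)² - 4 B σ (a - σ)`,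
so `D` vanishes exactly where `a (A - 1) - (B - 1) σ = ± 2 √(B σ (a - σ))`; the saddle-node value
`A_S(σ)` is the root with the `+` sign. -/

theorem yamada_discriminant_eq_sq_sub (a B σ A : ℝ) :
    a ^ 2 * (A - 1) ^ 2 - 2 * a * (B * A - A + B + 1) * σ + (B + 1) ^ 2 * σ ^ 2
      = (a * (A - 1) - (B - 1) * σ) ^ 2 - 4 * (B * σ * (a - σ)) := by
  ring

theorem mul_saddle_node_sub_one {a : ℝ} (ha : a ≠ 0) (B σ s : ℝ) :
    a * ((a + (B - 1) * σ + 2 * s) / a - 1) - (B - 1) * σ = 2 * s := by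
  field_simp
  ring

/-- The discriminant D(A) governing the existence of nontrivial equilibria of
the Yamada system vanishes at the saddle-node value
A_S(σ) = (a + (B-1)σ + 2√(Bσ(a-σ)))/a, provided 0 < σ < a and B > 0. -/
theorem discriminant_zero_at_saddle_node (a B σ : ℝ)
    (ha : 0 < a) (hB : 0 < B) (hσ : 0 < σ) (hσa : σ < a) :
    let A := (a + (B - 1) * σ + 2 * Real.sqrt (B * σ * (a - σ))) / a
    a ^ 2 * (A - 1) ^ 2 - 2 * a * (B * A - A + B + 1) * σ + (B + 1) ^ 2 * σ ^ 2 = 0 := by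
  intro A
  have hradicand : 0 ≤ B * σ * (a - σ) := by positivity [sub_pos.2 hσa]
  rw [yamada_discriminant_eq_sq_sub, mul_saddle_node_sub_one ha.ne', mul_pow,
    Real.sq_sqrt hradicand]
  ring
end

section
/- The saddle-node curve A_S(σ) = (a + (B-1)σ + 2√(Bσ(a-σ)))/a and the transcritical line A_T = B + 1 intersect (A_S(σ) = B + 1) exactly at σ = aB/(B+1), for 0 < σ < a, a > 0, B > 0. -/
/-!
Since `a(B + 1) - a - (B - 1)σ = B(a - σ) + σ`, the equation `A_S(σ) = B + 1` says that
`2√(B(a - σ) · σ) = B(a - σ) + σ`, the equality case of AM–GM, i.e. `B(a - σ) = σ`.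
-/

namespace Real

theorem add_sub_two_sqrt_mul {x y : ℝ} (hx : 0 ≤ x) (hy : 0 ≤ y) :
    x + y - 2 * √(x * y) = (√x - √y) ^ 2 := by
  rw [sqrt_mul hx, sub_sq, sq_sqrt hx, sq_sqrt hy]
  ring

theorem two_sqrt_mul_eq_add_iff {x y : ℝ} (hx : 0 ≤ x) (hy : 0 ≤ y) :
    2 * √(x * y) = x + y ↔ x = y := by
  rw [eq_comm, ← sub_eq_zero, add_sub_two_sqrt_mul hx hy, sq_eq_zero_iff, sub_eq_zero,
    sqrt_inj hx hy]

end Real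

/-- The saddle-node curve A_S(σ) = (a + (B-1)σ + 2√(Bσ(a-σ)))/a meets the
transcritical line A = B + 1 exactly at σ = aB/(B+1), for 0 < σ < a. -/
theorem saddle_node_meets_transcritical (a B σ : ℝ)
    (ha : 0 < a) (hB : 0 < B) (hσ : 0 < σ) (hσa : σ < a) :
    (a + (B - 1) * σ + 2 * Real.sqrt (B * σ * (a - σ))) / a = B + 1 ↔
      σ = a * B / (B + 1) := by
  have hBa : 0 ≤ B * (a - σ) := mul_nonneg hB.le (sub_nonneg.2 hσa.le)
  rw [div_eq_iff ha.ne', show B * σ * (a - σ) = B * (a - σ) * σ by ring,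
    eq_div_iff (by positivity : B + 1 ≠ 0)]
  calc a + (B - 1) * σ + 2 * √(B * (a - σ) * σ) = (B + 1) * a
      ↔ 2 * √(B * (a - σ) * σ) = B * (a - σ) + σ := by constructor <;> intro h <;> linarith
    _ ↔ B * (a - σ) = σ := Real.two_sqrt_mul_eq_add_iff hBa hσ.le
    _ ↔ σ * (B + 1) = a * B := by constructor <;> intro h <;> linarith
end

section
/- Let a, B > 0 and Q(σ) = a²B - 2aBσ² - aσ³ + (B+1)σ⁴. If a > (16/27)(-9B - 8B² + √(27B + 108B² + 144B³ + 64B⁴)), then Q has a positive real root. -/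
/-!
Since `Q'(σ) = σ q(σ)` with `q(σ) = 4(B+1)σ² - 3aσ - 4aB`, the positive critical point of `Q` is
the positive root of `q`. Reducing `Q` modulo `q` gives, at any root `σ` of `q`,
`64(B+1)² Q(σ) = a² (N - Dσ)` with `N = 64B(B+1) - 12aB` and `D = 64B(B+1) + 9a`,
so `Q` is negative there as soon as the root exceeds `σ* = N / D`, that is, as soon as
`q(σ*) < 0`. The identity `27 D² q(σ*) = -64 B (B+1)² G`, where
`G = (27a + 144B + 128B²)² - 256 B (4B+3)³`, turns this into `G > 0`, which is the hypothesis
on `a` squared out (note `27B + 108B² + 144B³ + 64B⁴ = B(4B+3)³`).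
As `Q → ∞`, the intermediate value theorem then yields a root beyond the critical point.
-/
open Filter

theorem exists_gt_eq_of_lt_of_tendsto_atTop {α δ : Type*} [ConditionallyCompleteLinearOrder α]
    [TopologicalSpace α] [OrderTopology α] [DenselyOrdered α] [LinearOrder δ] [TopologicalSpace δ]
    [OrderClosedTopology δ] {f : α → δ} (hf : Continuous f) (htop : Tendsto f atTop atTop)
    {x : α} {c : δ} (hx : f x < c) : ∃ y, x < y ∧ f y = c := by
  have : Nonempty α := ⟨x⟩
  obtain ⟨b, hcb, hxb⟩ := ((htop.eventually_ge_atTop c).and (eventually_ge_atTop x)).exists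
  obtain ⟨y, hy, rfl⟩ := intermediate_value_Icc hxb hf.continuousOn ⟨hx.le, hcb⟩
  exact ⟨y, hy.1.lt_of_ne (by rintro rfl; exact hx.false), rfl⟩

namespace YamadaQuartic

def quartic (a B σ : ℝ) : ℝ := a ^ 2 * B - 2 * a * B * σ ^ 2 - a * σ ^ 3 + (B + 1) * σ ^ 4

def critQuadratic (a B σ : ℝ) : ℝ := 4 * (B + 1) * σ ^ 2 - 3 * a * σ - 4 * a * B

noncomputable def threshold (a B : ℝ) : ℝ :=
  (64 * B * (B + 1) - 12 * a * B) / (64 * B * (B + 1) + 9 * a)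

def discr (a B : ℝ) : ℝ := (27 * a + 144 * B + 128 * B ^ 2) ^ 2 - 256 * B * (4 * B + 3) ^ 3

theorem continuous_quartic (a B : ℝ) : Continuous (quartic a B) := by
  unfold quartic; fun_prop

theorem continuous_critQuadratic (a B : ℝ) : Continuous (critQuadratic a B) := by
  unfold critQuadratic; fun_prop

theorem tendsto_quartic_atTop (a : ℝ) {B : ℝ} (hB : 0 < B + 1) :
    Tendsto (quartic a B) atTop atTop := by
  have h₁ : Tendsto (fun σ : ℝ => (B + 1) * σ - a) atTop atTop :=
    tendsto_atTop_add_const_right _ _ (tendsto_id.const_mul_atTop hB)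
  have h₂ := tendsto_atTop_add_const_right _ (-2 * a * B) (tendsto_id.atTop_mul_atTop₀ h₁)
  convert tendsto_atTop_add_const_right _ (a ^ 2 * B)
    ((tendsto_id.atTop_mul_atTop₀ tendsto_id).atTop_mul_atTop₀ h₂) using 2 with σ
  simp only [quartic, id]; ring

theorem tendsto_critQuadratic_atTop (a : ℝ) {B : ℝ} (hB : 0 < B + 1) :
    Tendsto (critQuadratic a B) atTop atTop := by
  have h₁ : Tendsto (fun σ : ℝ => 4 * (B + 1) * σ - 3 * a) atTop atTop :=
    tendsto_atTop_add_const_right _ _ (tendsto_id.const_mul_atTop (by positivity))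
  convert tendsto_atTop_add_const_right _ (-4 * a * B) (tendsto_id.atTop_mul_atTop₀ h₁)
    using 2 with σ
  simp only [critQuadratic, id]; ring

theorem quartic_mul_eq_of_critQuadratic_eq_zero {a B σ : ℝ} (h : critQuadratic a B σ = 0) :
    64 * (B + 1) ^ 2 * quartic a B σ
      = a ^ 2 * (64 * B * (B + 1) - 12 * a * B - (64 * B * (B + 1) + 9 * a) * σ) := by
  unfold quartic critQuadratic at *
  linear_combination
    (16 * (B + 1) ^ 2 * σ ^ 2 - 4 * a * (B + 1) * σ - 16 * a * B * (B + 1) - 3 * a ^ 2) * h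

theorem quartic_neg_of_critQuadratic_eq_zero {a B σ : ℝ} (ha : 0 < a) (hB : 0 < B)
    (hσ : threshold a B < σ) (h : critQuadratic a B σ = 0) : quartic a B σ < 0 := by
  have hD : 0 < 64 * B * (B + 1) + 9 * a := by positivity
  have hlin := (div_lt_iff₀ hD).mp hσ
  have hprod : 64 * (B + 1) ^ 2 * quartic a B σ < 0 := by
    rw [quartic_mul_eq_of_critQuadratic_eq_zero h]
    exact mul_neg_of_pos_of_neg (by positivity) (by linarith)
  exact neg_of_mul_neg_right hprod (by positivity)

theorem critQuadratic_threshold {a B : ℝ} (hD : 64 * B * (B + 1) + 9 * a ≠ 0) :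
    27 * (64 * B * (B + 1) + 9 * a) ^ 2 * critQuadratic a B (threshold a B)
      = -64 * B * (B + 1) ^ 2 * discr a B := by
  unfold critQuadratic threshold discr
  field_simp
  ring

theorem critQuadratic_threshold_neg {a B : ℝ} (ha : 0 < a) (hB : 0 < B) (hG : 0 < discr a B) :
    critQuadratic a B (threshold a B) < 0 := by
  have hD : 0 < 64 * B * (B + 1) + 9 * a := by positivity
  have hprod : 27 * (64 * B * (B + 1) + 9 * a) ^ 2 * critQuadratic a B (threshold a B) < 0 := by
    rw [critQuadratic_threshold hD.ne']
    have := mul_pos (mul_pos hB (pow_pos (by linarith : (0 : ℝ) < B + 1) 2)) hG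
    linarith
  exact neg_of_mul_neg_right hprod (by positivity)

theorem discr_pos {a B : ℝ} (h : a > (16 / 27) * (-9 * B - 8 * B ^ 2 +
      Real.sqrt (27 * B + 108 * B ^ 2 + 144 * B ^ 3 + 64 * B ^ 4))) : 0 < discr a B := by
  have := Real.lt_sq_of_sqrt_lt (show Real.sqrt (27 * B + 108 * B ^ 2 + 144 * B ^ 3 + 64 * B ^ 4)
    < 27 / 16 * a + 9 * B + 8 * B ^ 2 by linarith)
  unfold discr
  linear_combination 256 * this

theorem exists_critQuadratic_root {a B : ℝ} (ha : 0 < a) (hB : 0 < B) (hG : 0 < discr a B) :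
    ∃ r, 0 < r ∧ threshold a B < r ∧ critQuadratic a B r = 0 := by
  have hneg : critQuadratic a B (max (threshold a B) 0) < 0 := by
    rcases max_choice (threshold a B) 0 with h | h <;> rw [h]
    · exact critQuadratic_threshold_neg ha hB hG
    · simpa [critQuadratic] using mul_pos (mul_pos four_pos ha) hB
  obtain ⟨r, hr, hroot⟩ := exists_gt_eq_of_lt_of_tendsto_atTop (continuous_critQuadratic a B)
    (tendsto_critQuadratic_atTop a (by linarith)) hneg
  exact ⟨r, (le_max_right _ _).trans_lt hr, (le_max_left _ _).trans_lt hr, hroot⟩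

end YamadaQuartic

/-- If a > (16/27)(-9B - 8B² + √(27B + 108B² + 144B³ + 64B⁴)) with a, B > 0,
then the quartic Q(σ) = a²B - 2aBσ² - aσ³ + (B+1)σ⁴ has a positive real root. -/
theorem quartic_has_positive_root (a B : ℝ) (ha : 0 < a) (hB : 0 < B)
    (hcond : a > (16 / 27) * (-9 * B - 8 * B ^ 2 +
      Real.sqrt (27 * B + 108 * B ^ 2 + 144 * B ^ 3 + 64 * B ^ 4))) :
    ∃ σ : ℝ, 0 < σ ∧
      a ^ 2 * B - 2 * a * B * σ ^ 2 - a * σ ^ 3 + (B + 1) * σ ^ 4 = 0 := by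
  obtain ⟨r, hr₀, hr, hroot⟩ := YamadaQuartic.exists_critQuadratic_root ha hB
    (YamadaQuartic.discr_pos hcond)
  obtain ⟨σ, hσ, hQσ⟩ := exists_gt_eq_of_lt_of_tendsto_atTop
    (YamadaQuartic.continuous_quartic a B) (YamadaQuartic.tendsto_quartic_atTop a (by linarith))
    (YamadaQuartic.quartic_neg_of_critQuadratic_eq_zero ha hB hr hroot)
  exact ⟨σ, hr₀.trans hσ, hQσ⟩
end

section
/- With a = 1.8 and B = 5.8, the ordering 1 < (aB/(B+1))^(1/3) < σ_BT0 < aB/(B+1) holds, where σ_BT0 is the smallest positive root of Q(σ) = a²B - 2aBσ² - aσ³ + (B+1)σ⁴; i.e., the points HT₀, BT₀, and ST occur in this order as σ increases. -/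
/-!
`Q(σ) = 18.792 - 20.88σ² - 1.8σ³ + 6.8σ⁴` is decreasing on `[0, 1.16]` with `Q(1.16) > 0`, so
`σ_BT0 > 1.16`, and `1.16³ > aB/(B+1) = 261/170` puts the cube root below `σ_BT0`.
Since `Q(1.2) < 0`, `Q` has a root in `(1.16, 1.2)`, hence `σ_BT0 ≤ 1.2 < 261/170`.
-/

open Set

def btZeroPoly (a B σ : ℝ) : ℝ :=
  a ^ 2 * B - 2 * a * B * σ ^ 2 - a * σ ^ 3 + (B + 1) * σ ^ 4

lemma continuous_btZeroPoly (a B : ℝ) : Continuous (btZeroPoly a B) := by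
  unfold btZeroPoly; fun_prop

lemma le_of_forall_pos_zero_le {f : ℝ → ℝ} {a b s : ℝ} (ha : 0 < a) (hab : a ≤ b)
    (hf : ContinuousOn f (Icc a b)) (hfa : 0 ≤ f a) (hfb : f b ≤ 0)
    (hs : ∀ x, 0 < x → f x = 0 → s ≤ x) : s ≤ b := by
  obtain ⟨x, ⟨hax, hxb⟩, hfx⟩ := intermediate_value_Icc' hab hf ⟨hfb, hfa⟩
  exact (hs x (ha.trans_le hax) hfx).trans hxb

lemma btZeroPoly_pos_of_le {σ : ℝ} (h0 : 0 ≤ σ) (h1 : σ ≤ 1.16) :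
    0 < btZeroPoly 1.8 5.8 σ := by
  unfold btZeroPoly
  -- `Q(σ) - Q(1.16)` is `1.16 - σ` times a polynomial that is nonnegative on `[0, 1.16]`
  nlinarith [mul_nonneg h0 (sub_nonneg.2 h1), mul_nonneg (mul_nonneg h0 h0) (sub_nonneg.2 h1),
    mul_nonneg (mul_nonneg (mul_nonneg h0 h0) h0) (sub_nonneg.2 h1)]

/-- With a = 1.8 and B = 5.8, letting σ_BT0 be the smallest positive root of
Q(σ) = a²B - 2aBσ² - aσ³ + (B+1)σ⁴, the ordering
1 < (aB/(B+1))^(1/3) < σ_BT0 < aB/(B+1) holds: the points HT₀, BT₀ and ST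
occur in this order as σ increases. -/
theorem ordering_HT0_BT0_ST (σBT0 : ℝ)
    (hpos : 0 < σBT0)
    (hroot : (1.8 : ℝ) ^ 2 * 5.8 - 2 * 1.8 * 5.8 * σBT0 ^ 2 - 1.8 * σBT0 ^ 3
        + (5.8 + 1) * σBT0 ^ 4 = 0)
    (hmin : ∀ σ : ℝ, 0 < σ →
      (1.8 : ℝ) ^ 2 * 5.8 - 2 * 1.8 * 5.8 * σ ^ 2 - 1.8 * σ ^ 3 + (5.8 + 1) * σ ^ 4 = 0 →
      σBT0 ≤ σ) :
    1 < ((1.8 * 5.8 / (5.8 + 1) : ℝ)) ^ ((1 : ℝ) / 3) ∧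
    ((1.8 * 5.8 / (5.8 + 1) : ℝ)) ^ ((1 : ℝ) / 3) < σBT0 ∧
    σBT0 < (1.8 * 5.8 / (5.8 + 1) : ℝ) := by
  have hlow : 1.16 < σBT0 :=
    lt_of_not_ge fun h ↦ (btZeroPoly_pos_of_le hpos.le h).ne' hroot
  have hup : σBT0 ≤ 1.2 :=
    le_of_forall_pos_zero_le (by norm_num) (by norm_num) (continuous_btZeroPoly _ _).continuousOn
      (btZeroPoly_pos_of_le (by norm_num) le_rfl).le (by norm_num [btZeroPoly]) hmin
  have hcbrt_lt : ((1.8 * 5.8 / (5.8 + 1) : ℝ)) ^ ((1 : ℝ) / 3) < 1.16 := by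
    rw [one_div, Real.rpow_inv_lt_iff_of_pos (by norm_num) (by norm_num) (by norm_num)]
    norm_num
  exact ⟨Real.one_lt_rpow (by norm_num) (by norm_num), hcbrt_lt.trans hlow,
    hup.trans_lt (by norm_num)⟩
end

section
/- For B > 1 and 0 < σ < a, the saddle-node value A_S(σ) = (a + (B-1)σ + 2√(Bσ(a-σ)))/a satisfies A_S(σ) > 1, and for 1 ≤ σ < aB/(B+1) one has 1 < A_S(σ) < B + 1. -/
/-- For B > 1 and 0 < σ < a, the saddle-node value
A_S(σ) = (a + (B-1)σ + 2√(Bσ(a-σ)))/a satisfies A_S(σ) > 1; moreover for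
1 ≤ σ < aB/(B+1) one has 1 < A_S(σ) < B + 1. -/
theorem saddle_node_before_transcritical (a B σ : ℝ)
    (ha : 0 < a) (hB : 1 < B) (hσ : 0 < σ) (hσa : σ < a) :
    1 < (a + (B - 1) * σ + 2 * Real.sqrt (B * σ * (a - σ))) / a ∧
    (1 ≤ σ → σ < a * B / (B + 1) →
      (a + (B - 1) * σ + 2 * Real.sqrt (B * σ * (a - σ))) / a < B + 1) := by
  have hs : 0 ≤ Real.sqrt (B * σ * (a - σ)) := Real.sqrt_nonneg _
  constructor
  · rw [one_lt_div ha]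
    nlinarith
  · intro h1 h2
    rw [div_lt_iff₀ ha]
    have hlt : σ * (B + 1) < a * B := by
      have hb : 0 < B + 1 := by linarith
      calc σ * (B + 1) < (a * B / (B + 1)) * (B + 1) := by
            exact mul_lt_mul_of_pos_right h2 hb
        _ = a * B := by field_simp
    have ht : 0 < (B * a - (B - 1) * σ) / 2 := by nlinarith
    have key : Real.sqrt (B * σ * (a - σ)) < (B * a - (B - 1) * σ) / 2 := by
      rw [Real.sqrt_lt' ht]
      nlinarith [sq_nonneg (B * a - (B + 1) * σ), mul_pos (sub_pos.mpr hlt) (sub_pos.mpr hlt)]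
    nlinarith
end
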